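/- (Proposition 3.3, lower bound) Let K_w, C_w, c_w be the constants from the hypotheses on W and let q*, ε_0 be the constants from the interpolation inequality applied with A = Ω. Set q_0 := q*/(2q* + 4K_w + 4C_w² + 10). Then there exists ε_1 > 0 (one can take ε_1 := min{ε_0, (c_w/(12 C(Ω)))^{1/4}}, where C(Ω) is the constant from the elliptic estimate on Ω) such that for every 0 < q ≤ q_0, every v ∈ W^{3,2}(Ω), and every 0 < ε < ε_1: F_ε[v] ≥ q I_ε[v; Ω] − (12q/q*) C(Ω) ε³ |Ω|. -/

import Mathlib

open MeasureTheory Filter Topology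
open scoped RealInnerProductSpace

noncomputable section

abbrev Euc (d : ℕ) := EuclideanSpace ℝ (Fin d)

variable {d : ℕ}

/-- The Laplacian of `v`, as the trace of the second derivative. -/
def lap (v : Euc d → ℝ) (x : Euc d) : ℝ :=
  ∑ i : Fin d, iteratedFDeriv ℝ 2 v x
    ![EuclideanSpace.single i (1:ℝ), EuclideanSpace.single i (1:ℝ)]

/-- `|∇v|²`. -/
def gradSq (v : Euc d → ℝ) (x : Euc d) : ℝ := ‖gradient v x‖ ^ 2

/-- `|∇²v|²` (squared norm of the Hessian). -/
def hessSq (v : Euc d → ℝ) (x : Euc d) : ℝ := ‖iteratedFDeriv ℝ 2 v x‖ ^ 2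

/-- `|∇Δv|²`. -/
def gradLapSq (v : Euc d → ℝ) (x : Euc d) : ℝ := ‖gradient (lap v) x‖ ^ 2

/-- Encoding of membership in the Sobolev space `W^{k,2}(Ω)`:
`v` is `k` times differentiable on `Ω` and all derivatives up to order `k`
are square integrable on `Ω`. -/
def MemW (k : ℕ) (Ω : Set (Euc d)) (v : Euc d → ℝ) : Prop :=
  ContDiffOn ℝ k v Ω ∧
    ∀ j : ℕ, j ≤ k → MemLp (fun x => ‖iteratedFDeriv ℝ j v x‖) 2 (volume.restrict Ω)

/-- `nrm` is the outward unit normal vector field of `Ω` on its boundary. -/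
def OutwardNormal (Ω : Set (Euc d)) (nrm : Euc d → Euc d) : Prop :=
  ∀ x ∈ frontier Ω, ‖nrm x‖ = 1 ∧
    ∀ᶠ t : ℝ in 𝓝[>] 0, x + t • nrm x ∉ closure Ω ∧ x - t • nrm x ∈ Ω

/-- Homogeneous Neumann boundary condition `∂v/∂n = 0` on `∂Ω`. -/
def NeumannBC (Ω : Set (Euc d)) (nrm : Euc d → Euc d) (v : Euc d → ℝ) : Prop :=
  ∀ x ∈ frontier Ω, ⟪gradient v x, nrm x⟫ = 0

/-- The localized energy `F_ε[v; A]`. -/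
def FepsOn (W : ℝ → ℝ) (q ε : ℝ) (v : Euc d → ℝ) (A : Set (Euc d)) : ℝ :=
  ∫ x in A, ((1/ε) * W (-(ε^2) * lap v x + v x) - ε * q * gradSq v x
    + (1 - 2*q) * ε^3 * (lap v x)^2 + (1 - q) * ε^5 * gradLapSq v x)

/-- The auxiliary energy `I_ε[v; A]`. -/
def IepsOn (W : ℝ → ℝ) (ε : ℝ) (v : Euc d → ℝ) (A : Set (Euc d)) : ℝ :=
  ∫ x in A, ((1/ε) * W (v x) + ε * gradSq v x + ε^3 * hessSq v x + ε^5 * gradLapSq v x)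

open Classical in
/-- The total functional `F_ε : L²(Ω) → (-∞, ∞]`, equal to `F_ε[v; Ω]` when
`v ∈ W^{3,2}(Ω)` with Neumann boundary conditions, and `+∞` otherwise. -/
def Feps (W : ℝ → ℝ) (q ε : ℝ) (Ω : Set (Euc d)) (nrm : Euc d → Euc d)
    (v : Euc d → ℝ) : EReal :=
  if MemW 3 Ω v ∧ NeumannBC Ω nrm v then ((FepsOn W q ε v Ω : ℝ) : EReal) else ⊤

/-- Hypotheses on the double-well potential `W`. -/
structure DoubleWell (W : ℝ → ℝ) (cw Kw Cw : ℝ) : Prop where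
  smooth : ContDiff ℝ 2 W
  pos : ∀ s : ℝ, s ≠ 1 → s ≠ -1 → 0 < W s
  zero_one : W 1 = 0
  zero_negone : W (-1) = 0
  cw_pos : 0 < cw
  lb_right : ∀ s : ℝ, 0 ≤ s → cw * (s - 1)^2 ≤ W s
  lb_left : ∀ s : ℝ, s ≤ 0 → cw * (s + 1)^2 ≤ W s
  Kw_pos : 0 < Kw
  Cw_pos : 0 < Cw
  deriv_bound : ∀ s : ℝ, |deriv W s| ≤ Cw * Real.sqrt (W s)
  deriv2_bound : ∀ s : ℝ, |deriv (deriv W) s| ≤ Kw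

/-- Divergence of a vector field. -/
def divg (φ : Euc d → Euc d) (x : Euc d) : ℝ :=
  ∑ i : Fin d, ⟪fderiv ℝ φ x (EuclideanSpace.single i (1:ℝ)),
    EuclideanSpace.single i (1:ℝ)⟫

/-- The set of values `∫_{E ∩ Ω} div φ` over admissible test vector fields,
used to define the perimeter of `E` in `Ω`. -/
def divSet (Ω E : Set (Euc d)) : Set ℝ :=
  {r | ∃ φ : Euc d → Euc d, ContDiff ℝ 1 φ ∧ HasCompactSupport φ ∧ tsupport φ ⊆ Ω ∧
      (∀ x, ‖φ x‖ ≤ 1) ∧ r = ∫ x in E ∩ Ω, divg φ x}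

/-- `E` has finite perimeter in `Ω`. -/
def FinitePerimeter (Ω E : Set (Euc d)) : Prop := BddAbove (divSet Ω E)

/-- The perimeter `Per_Ω(E)`. -/
def perim (Ω E : Set (Euc d)) : ℝ := sSup (divSet Ω E)

/-- `v ∈ BV(Ω; {−1, 1})`. -/
def BVpm (Ω : Set (Euc d)) (v : Euc d → ℝ) : Prop :=
  (∀ x ∈ Ω, v x = 1 ∨ v x = -1) ∧ FinitePerimeter Ω {x | v x = 1}

open Classical in
/-- The limiting functional `F[v] = m_d Per_Ω({v = 1})` on `BV(Ω; {±1})`, `+∞` otherwise. -/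
def limitF (md : ℝ) (Ω : Set (Euc d)) (v : Euc d → ℝ) : EReal :=
  if BVpm Ω v then (((md * perim Ω {x | v x = 1}) : ℝ) : EReal) else ⊤

/-- The open unit cube `Q` centered at the origin. -/
def unitCube (d : ℕ) : Set (Euc d) := {x | ∀ i, |x i| < 1/2}

/-- The open cube `Q(x₀, r)` centered at `x₀` of side `r`. -/
def cubeAt (x0 : Euc d) (r : ℝ) : Set (Euc d) := {x | ∀ i, |x i - x0 i| < r/2}

/-- The admissible class `A_ν` for `ν = e_j` (axis direction `j`):
`W^{3,2}_loc` functions, equal to `1` near `{x_j = -1/2}`, to `-1` near `{x_j = 1/2}`,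
and periodic in the remaining directions. -/
def Admissible (d : ℕ) (j : Fin d) (v : Euc d → ℝ) : Prop :=
  ContDiff ℝ 3 v ∧
  (∃ δ > (0:ℝ), ∀ x : Euc d, |x j + 1/2| < δ → v x = 1) ∧
  (∃ δ > (0:ℝ), ∀ x : Euc d, |x j - 1/2| < δ → v x = -1) ∧
  (∀ i : Fin d, i ≠ j → ∀ x : Euc d, v (x + EuclideanSpace.single i (1:ℝ)) = v x)

/-- The surface energy density `m_d`. -/
def mdConst (W : ℝ → ℝ) (q : ℝ) (d : ℕ) (j : Fin d) : ℝ :=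
  sInf {r | ∃ ε v, 0 < ε ∧ ε ≤ 1 ∧ Admissible d j v ∧ r = FepsOn W q ε v (unitCube d)}

/-- The open cube `Q_ν(0, r)` adapted to the orthonormal basis `b`. -/
def cubeB (b : OrthonormalBasis (Fin d) ℝ (Euc d)) (r : ℝ) : Set (Euc d) :=
  {x | ∀ i, |⟪x, b i⟫| < r/2}

/-- The admissible class `A_ν` for `ν = b j`. -/
def AdmissibleB (b : OrthonormalBasis (Fin d) ℝ (Euc d)) (j : Fin d) (v : Euc d → ℝ) : Prop :=
  ContDiff ℝ 3 v ∧
  (∃ δ > (0:ℝ), ∀ x : Euc d, |⟪x, b j⟫ + 1/2| < δ → v x = 1) ∧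
  (∃ δ > (0:ℝ), ∀ x : Euc d, |⟪x, b j⟫ - 1/2| < δ → v x = -1) ∧
  (∀ i : Fin d, i ≠ j → ∀ x : Euc d, v (x + b i) = v x)

/-- The surface energy density `m_d` defined through the cube `Q_ν`, `ν = b j`. -/
def mdB (W : ℝ → ℝ) (q : ℝ) (b : OrthonormalBasis (Fin d) ℝ (Euc d)) (j : Fin d) : ℝ :=
  sInf {r | ∃ ε v, 0 < ε ∧ ε ≤ 1 ∧ AdmissibleB b j v ∧ r = FepsOn W q ε v (cubeB b 1)}

/-- Open coordinate boxes (rectangles). -/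
def IsOpenBox (S : Set (Euc d)) : Prop :=
  ∃ a b : Fin d → ℝ, S = {x : Euc d | ∀ i, x i ∈ Set.Ioo (a i) (b i)}

/-- `A` has a `C¹` boundary (encoded through a continuous outward unit normal field). -/
def HasC1Boundary (A : Set (Euc d)) : Prop :=
  ∃ nrm : Euc d → Euc d, OutwardNormal A nrm ∧ ContinuousOn nrm (frontier A)

/-- `A` is a union of finitely many pairwise disjoint open rectangles and a null set. -/
def IsRectUnion (A : Set (Euc d)) : Prop :=
  ∃ (m : ℕ) (R : Fin m → Set (Euc d)) (N : Set (Euc d)),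
    (∀ i, IsOpenBox (R i)) ∧ Pairwise (Function.onFun Disjoint R) ∧ volume N = 0 ∧
    A = (⋃ i, R i) ∪ N

/-- The nonlocal functional `F*_ε[u]`, expressed with the resolvent `vres = (1-ε²Δ)⁻¹u`. -/
def FstarOn (W : ℝ → ℝ) (q ε : ℝ) (Ω : Set (Euc d)) (u vres : Euc d → ℝ) : ℝ :=
  (1/ε) * ∫ x in Ω, (W (u x) - (u x)^2 + (1-q) * ε^2 * gradSq u x + u x * vres x)


/-!
Put `u = v - ε²Δv`, the argument of `W` in `F_ε`. A second-order Taylor expansion of `W` together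
with `|W'| ≤ C_w √W` gives `W(v) ≤ 3/2 W(u) + (C_w² + K_w)/2 ε⁴ (Δv)²`, so `F_ε[v]` controls
`∫ W(v)/ε` at the price of part of its `ε³ ∫ (Δv)²` term. The gradient term of `I_ε` is bounded by
the interpolation inequality and the Hessian term by the elliptic estimate; the `∫ v²` that the
latter brings in is at most `2/c_w ∫ W(v) + 2|Ω|` by the coercivity of `W`, and once
`C(Ω) ε⁴ ≤ c_w/12` its first part is absorbed as well. Since `q/q*` is small, all these
contributions fit under the coefficients of `F_ε`, leaving only the error `ε³ |Ω|`.
-/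

theorem le_add_deriv_mul_add_sq_of_abs_deriv_sub_le {f : ℝ → ℝ} {K : ℝ}
    (hf : Differentiable ℝ f) (hf' : ∀ x y, |deriv f x - deriv f y| ≤ K * |x - y|) (a b : ℝ) :
    f b ≤ f a + deriv f a * (b - a) + K / 2 * (b - a) ^ 2 := by
  set c := b - a
  set g : ℝ → ℝ := fun t => f (a + t * c) - t * (deriv f a * c) - K / 2 * c ^ 2 * t ^ 2
  have hg : ∀ t, HasDerivAt g (deriv f (a + t * c) * c - deriv f a * c - K * c ^ 2 * t) t := by
    intro t
    have hline : HasDerivAt (fun t : ℝ => a + t * c) c t := by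
      simpa using ((hasDerivAt_id t).mul_const c).const_add a
    have := (((hf _).hasDerivAt.comp t hline).sub ((hasDerivAt_id t).mul_const (deriv f a * c))).sub
      ((hasDerivAt_pow 2 t).const_mul (K / 2 * c ^ 2))
    exact this.congr_deriv (by simp only [one_mul, Nat.add_one_sub_one, pow_one]; ring)
  have hanti : AntitoneOn g (Set.Icc 0 1) := by
    refine antitoneOn_of_deriv_nonpos (convex_Icc 0 1)
      (fun t _ => (hg t).continuousAt.continuousWithinAt)
      (fun t _ => (hg t).differentiableAt.differentiableWithinAt) fun t ht => ?_
    rw [interior_Icc] at ht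
    rw [(hg t).deriv]
    have hlip : |deriv f (a + t * c) - deriv f a| ≤ K * (t * |c|) := by
      simpa [abs_mul, abs_of_pos ht.1] using hf' (a + t * c) a
    have : (deriv f (a + t * c) - deriv f a) * c ≤ K * t * c ^ 2 := by
      calc (deriv f (a + t * c) - deriv f a) * c
          ≤ |deriv f (a + t * c) - deriv f a| * |c| := by rw [← abs_mul]; exact le_abs_self _
        _ ≤ K * (t * |c|) * |c| := by gcongr
        _ = K * t * c ^ 2 := by rw [← sq_abs c]; ring
    linarith
  have h01 := hanti (Set.left_mem_Icc.2 zero_le_one) (Set.right_mem_Icc.2 zero_le_one) zero_le_one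
  simp only [g, c, zero_mul, add_zero, one_mul, add_sub_cancel] at h01
  linarith

namespace DoubleWell

variable {W : ℝ → ℝ} {cw Kw Cw : ℝ}

theorem nonneg (hW : DoubleWell W cw Kw Cw) (s : ℝ) : 0 ≤ W s := by
  by_cases h1 : s = 1
  · exact (h1 ▸ hW.zero_one).ge
  by_cases h2 : s = -1
  · exact (h2 ▸ hW.zero_negone).ge
  exact (hW.pos s h1 h2).le

theorem abs_deriv_sub_le (hW : DoubleWell W cw Kw Cw) (x y : ℝ) :
    |deriv W x - deriv W y| ≤ Kw * |x - y| := by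
  have hW' : Differentiable ℝ (deriv W) :=
    (hW.smooth.iterate_deriv' 1 1).differentiable (by norm_num)
  simpa [Real.norm_eq_abs] using Convex.norm_image_sub_le_of_norm_deriv_le
    (fun z _ => hW' z) (fun z _ => hW.deriv2_bound z) convex_univ (Set.mem_univ y) (Set.mem_univ x)

theorem le_three_halves_mul_add (hW : DoubleWell W cw Kw Cw) (s t : ℝ) :
    W s ≤ 3 / 2 * W t + (Cw ^ 2 + Kw) / 2 * (s - t) ^ 2 := by
  have htaylor := le_add_deriv_mul_add_sq_of_abs_deriv_sub_le
    (hW.smooth.differentiable (by norm_num)) hW.abs_deriv_sub_le t s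
  have hderiv : deriv W t * (s - t) ≤ Cw * √(W t) * |s - t| := by
    calc deriv W t * (s - t) ≤ |deriv W t| * |s - t| := by rw [← abs_mul]; exact le_abs_self _
      _ ≤ Cw * √(W t) * |s - t| := by gcongr; exact hW.deriv_bound t
  -- AM-GM: `2 Cw √(W t) |s - t| ≤ W t + Cw² (s - t)²`
  have hamgm := sq_nonneg (√(W t) - Cw * |s - t|)
  rw [sub_sq, mul_pow, sq_abs, Real.sq_sqrt (hW.nonneg t)] at hamgm
  nlinarith

theorem sq_le (hW : DoubleWell W cw Kw Cw) (s : ℝ) : s ^ 2 ≤ 2 / cw * W s + 2 := by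
  have hcw := hW.cw_pos
  have key : cw * (s ^ 2 / 2 - 1) ≤ W s := by
    rcases le_total 0 s with hs | hs
    · nlinarith [hW.lb_right s hs, sq_nonneg (s - 2)]
    · nlinarith [hW.lb_left s hs, sq_nonneg (s + 2)]
  rw [div_mul_eq_mul_div, ← sub_le_iff_le_add, le_div_iff₀ hcw]
  linarith

variable {α : Type*} [MeasurableSpace α] {μ : Measure α} [IsFiniteMeasure μ] {f g : α → ℝ}

theorem integrable_comp (hW : DoubleWell W cw Kw Cw) (hf : MemLp f 2 μ) :
    Integrable (fun x => W (f x)) μ := by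
  refine ((integrable_const (3 / 2 * W 0)).add
    (hf.integrable_sq.const_mul ((Cw ^ 2 + Kw) / 2))).mono'
    (hW.smooth.continuous.comp_aestronglyMeasurable hf.1) (ae_of_all _ fun x => ?_)
  rw [Real.norm_eq_abs, abs_of_nonneg (hW.nonneg _)]
  simpa using hW.le_three_halves_mul_add (f x) 0

theorem integral_le_three_halves_mul_add (hW : DoubleWell W cw Kw Cw) (hf : MemLp f 2 μ)
    (hg : MemLp g 2 μ) :
    ∫ x, W (f x) ∂μ ≤ 3 / 2 * ∫ x, W (g x) ∂μ + (Cw ^ 2 + Kw) / 2 * ∫ x, (f x - g x) ^ 2 ∂μ := by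
  have hWg := (hW.integrable_comp hg).const_mul (3 / 2)
  have hfg : Integrable (fun x => (Cw ^ 2 + Kw) / 2 * (f x - g x) ^ 2) μ :=
    (hf.sub hg).integrable_sq.const_mul _
  rw [← integral_const_mul, ← integral_const_mul, ← integral_add hWg hfg]
  exact integral_mono (hW.integrable_comp hf) (hWg.add hfg)
    fun x => hW.le_three_halves_mul_add (f x) (g x)

theorem integral_sq_le (hW : DoubleWell W cw Kw Cw) (hf : MemLp f 2 μ) :
    ∫ x, f x ^ 2 ∂μ ≤ 2 / cw * ∫ x, W (f x) ∂μ + 2 * μ.real Set.univ := by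
  have hWf := (hW.integrable_comp hf).const_mul (2 / cw)
  calc ∫ x, f x ^ 2 ∂μ ≤ ∫ x, (2 / cw * W (f x) + 2) ∂μ :=
        integral_mono hf.integrable_sq (hWf.add (integrable_const _)) fun x => hW.sq_le (f x)
    _ = 2 / cw * ∫ x, W (f x) ∂μ + 2 * μ.real Set.univ := by
        rw [integral_add hWf (integrable_const _), integral_const_mul, integral_const,
          smul_eq_mul]
        ring

end DoubleWell

section Calculus

variable {d : ℕ}

theorem norm_gradient {E : Type*} [NormedAddCommGroup E] [InnerProductSpace ℝ E] [CompleteSpace E]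
    (f : E → ℝ) (x : E) : ‖gradient f x‖ = ‖fderiv ℝ f x‖ :=
  (InnerProductSpace.toDual ℝ E).symm.norm_map _

theorem measurable_gradient {E : Type*} [NormedAddCommGroup E] [InnerProductSpace ℝ E]
    [CompleteSpace E] [MeasurableSpace E] [BorelSpace E] (f : E → ℝ) :
    Measurable (gradient f) :=
  (InnerProductSpace.toDual ℝ E).symm.continuous.measurable.comp (measurable_fderiv ℝ f)

theorem norm_apply_const_single_le {n : ℕ} {F : Type*} [NormedAddCommGroup F] [NormedSpace ℝ F]
    (T : ContinuousMultilinearMap ℝ (fun _ : Fin n => Euc d) F) (i : Fin d) :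
    ‖T (fun _ => EuclideanSpace.single i 1)‖ ≤ ‖T‖ := by
  simpa using T.le_opNorm fun _ => EuclideanSpace.single i 1

theorem lap_eq_sum (v : Euc d → ℝ) (x : Euc d) :
    lap v x = ∑ i : Fin d, iteratedFDeriv ℝ 2 v x (fun _ => EuclideanSpace.single i 1) := by
  simp only [lap]
  congr! with i _ k
  fin_cases k <;> rfl

theorem abs_lap_le (v : Euc d → ℝ) (x : Euc d) : |lap v x| ≤ d * ‖iteratedFDeriv ℝ 2 v x‖ := by
  rw [lap_eq_sum]
  calc _ ≤ ∑ i : Fin d, ‖iteratedFDeriv ℝ 2 v x (fun _ => EuclideanSpace.single i 1)‖ :=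
        Finset.abs_sum_le_sum_abs _ _
    _ ≤ ∑ _i : Fin d, ‖iteratedFDeriv ℝ 2 v x‖ :=
        Finset.sum_le_sum fun i _ => norm_apply_const_single_le _ i
    _ = d * ‖iteratedFDeriv ℝ 2 v x‖ := by simp

theorem measurable_lap (v : Euc d → ℝ) : Measurable (lap v) := by
  simp only [funext (lap_eq_sum v), iteratedFDeriv_two_apply]
  exact Finset.measurable_sum _ fun i _ =>
    (ContinuousLinearMap.apply ℝ ℝ _).continuous.measurable.comp
      (measurable_fderiv_apply_const ℝ _ _)

theorem norm_gradient_lap_le {Ω : Set (Euc d)} (hΩ : IsOpen Ω) {v : Euc d → ℝ}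
    (hv : ContDiffOn ℝ 3 v Ω) {x : Euc d} (hx : x ∈ Ω) :
    ‖gradient (lap v) x‖ ≤ d * ‖iteratedFDeriv ℝ 3 v x‖ := by
  have hD2 : DifferentiableAt ℝ (iteratedFDeriv ℝ 2 v) x :=
    ((hv.contDiffAt (hΩ.mem_nhds hx)).differentiableAt_iteratedFDeriv (by norm_num))
  set e : Fin d → Fin 2 → Euc d := fun i _ => EuclideanSpace.single i 1
  have hlap : HasFDerivAt (lap v)
      (∑ i, (ContinuousMultilinearMap.apply ℝ _ ℝ (e i)).comp
        (fderiv ℝ (iteratedFDeriv ℝ 2 v) x)) x := by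
    rw [show lap v = fun y => ∑ i, iteratedFDeriv ℝ 2 v y (e i) from funext (lap_eq_sum v)]
    exact HasFDerivAt.fun_sum fun i _ =>
      (ContinuousMultilinearMap.apply ℝ _ ℝ (e i)).hasFDerivAt.comp x hD2.hasFDerivAt
  have hterm (i : Fin d) : ‖(ContinuousMultilinearMap.apply ℝ _ ℝ (e i)).comp
      (fderiv ℝ (iteratedFDeriv ℝ 2 v) x)‖ ≤ ‖iteratedFDeriv ℝ 3 v x‖ := by
    rw [← norm_fderiv_iteratedFDeriv]
    refine ContinuousLinearMap.opNorm_le_bound _ (by positivity) fun w => ?_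
    exact (norm_apply_const_single_le _ i).trans ((fderiv ℝ _ x).le_opNorm w)
  rw [norm_gradient, hlap.fderiv]
  calc _ ≤ ∑ _i : Fin d, ‖iteratedFDeriv ℝ 3 v x‖ :=
        (norm_sum_le _ _).trans (Finset.sum_le_sum fun i _ => hterm i)
    _ = d * ‖iteratedFDeriv ℝ 3 v x‖ := by simp

end Calculus

section Integrability

variable {d : ℕ} {Ω : Set (Euc d)} {v : Euc d → ℝ} {k : ℕ}

theorem MemW.mono {j : ℕ} (hv : MemW k Ω v) (hjk : j ≤ k) : MemW j Ω v :=
  ⟨hv.1.of_le (by exact_mod_cast hjk), fun i hi => hv.2 i (hi.trans hjk)⟩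

theorem MemW.memLp (hΩ : MeasurableSet Ω) (hv : MemW k Ω v) : MemLp v 2 (volume.restrict Ω) :=
  (memLp_norm_iff (hv.1.continuousOn.aestronglyMeasurable hΩ)).1 <| by
    simpa using hv.2 0 (Nat.zero_le k)

theorem MemW.integrable_gradSq (hv : MemW k Ω v) (hk : 1 ≤ k) :
    Integrable (gradSq v) (volume.restrict Ω) := by
  refine (hv.2 1 hk).integrable_sq.congr (ae_of_all _ fun x => ?_)
  simp [gradSq, norm_gradient]

theorem MemW.integrable_hessSq (hv : MemW k Ω v) (hk : 2 ≤ k) :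
    Integrable (hessSq v) (volume.restrict Ω) :=
  (hv.2 2 hk).integrable_sq

theorem MemW.memLp_lap (hv : MemW k Ω v) (hk : 2 ≤ k) : MemLp (lap v) 2 (volume.restrict Ω) :=
  (hv.2 2 hk).of_le_mul (measurable_lap v).aestronglyMeasurable
    (ae_of_all _ fun x => by simpa using abs_lap_le v x)

theorem MemW.integrable_gradLapSq (hΩ : IsOpen Ω) (hv : MemW 3 Ω v) :
    Integrable (gradLapSq v) (volume.restrict Ω) := by
  have hL2 : MemLp (gradient (lap v)) 2 (volume.restrict Ω) := by
    refine (hv.2 3 le_rfl).of_le_mul (c := d) (measurable_gradient (lap v)).aestronglyMeasurable ?_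
    filter_upwards [ae_restrict_mem hΩ.measurableSet] with x hx
    simpa using norm_gradient_lap_le hΩ hv.1 hx
  exact (memLp_two_iff_integrable_sq_norm hL2.1).1 hL2

end Integrability

theorem lower_bound_of_scaled_bounds {qstar q c A a B H L G M : ℝ}
    (hqs0 : 0 < qstar) (hqs1 : qstar < 1) (hq : 0 < q) (hc : 0 ≤ c)
    (hq0 : q * (2 * qstar + 8 * c + 10) ≤ qstar)
    (hA : 0 ≤ A) (ha : 0 ≤ a) (hH : 0 ≤ H) (hL : 0 ≤ L) (hG : 0 ≤ G) (hM : 0 ≤ M)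
    (hWa : a ≤ 3 / 2 * A + c * L) (hB : qstar * B ≤ a + H) (hHL : H ≤ 3 * L + a / 6 + 2 * M) :
    q * (a + B + H + G) - 12 * (q / qstar) * M ≤ A - q * B + (1 - 2 * q) * L + (1 - q) * G := by
  set r := q / qstar
  have hr : 0 ≤ r := by positivity
  have hqr : q = r * qstar := (div_mul_cancel₀ q hqs0.ne').symm
  have hrD : r * (2 * qstar + 8 * c + 10) ≤ 1 := by
    rw [div_mul_eq_mul_div, div_le_one hqs0]; exact hq0
  have hq_le_r : q ≤ r := by rw [hqr]; nlinarith
  have hqB : q * B ≤ r * (a + H) := by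
    rw [hqr, mul_assoc]; exact mul_le_mul_of_nonneg_left hB hr
  -- all of `a` and `H` is absorbed: `q (a + 2B + H) ≤ 3r (a + H) ≤ 7/2 r a + 9 r L + 6 r M`
  have haH : q * (a + H) ≤ r * (a + H) := mul_le_mul_of_nonneg_right hq_le_r (by positivity)
  have hH' : r * H ≤ r * (3 * L + a / 6 + 2 * M) := mul_le_mul_of_nonneg_left hHL hr
  have ha' : r * a ≤ r * (3 / 2 * A + c * L) := mul_le_mul_of_nonneg_left hWa hr
  have hrA : 21 / 4 * r * A ≤ A := by
    have : 21 / 4 * r ≤ 1 := by nlinarith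
    nlinarith
  have hrL : (7 / 2 * c + 9) * r * L ≤ (1 - 2 * q) * L := by
    have : (7 / 2 * c + 9) * r ≤ 1 - 2 * q := by nlinarith
    exact mul_le_mul_of_nonneg_right this hL
  have hqG : q * G ≤ (1 - q) * G := mul_le_mul_of_nonneg_right (by nlinarith) hG
  have hrM : 0 ≤ r * M := by positivity
  nlinarith

theorem lower_bound_of_bounds {qstar q ε CΩ cw Kw Cw m A a b h L G V : ℝ}
    (hqs0 : 0 < qstar) (hqs1 : qstar < 1) (hq : 0 < q)
    (hq0 : q ≤ qstar / (2 * qstar + 4 * Kw + 4 * Cw ^ 2 + 10))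
    (hKw : 0 ≤ Kw) (hcw : 0 < cw) (hCΩ : 0 ≤ CΩ) (hε : 0 < ε) (hε4 : CΩ * ε ^ 4 ≤ cw / 12)
    (hm : 0 ≤ m) (hA : 0 ≤ A) (ha : 0 ≤ a) (hh : 0 ≤ h) (hL : 0 ≤ L) (hG : 0 ≤ G)
    (hWa : a ≤ 3 / 2 * A + (Cw ^ 2 + Kw) / 2 * (ε ^ 4 * L))
    (hb : qstar * (ε * b) ≤ a / ε + ε ^ 3 * h)
    (hhL : h ≤ 3 * L + CΩ * V) (hV : V ≤ 2 / cw * a + 2 * m) :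
    q * (1 / ε * a + ε * b + ε ^ 3 * h + ε ^ 5 * G) - 12 * q / qstar * CΩ * ε ^ 3 * m ≤
      1 / ε * A - ε * q * b + (1 - 2 * q) * ε ^ 3 * L + (1 - q) * ε ^ 5 * G := by
  have hB : qstar * (ε ^ 2 * b) ≤ a + ε ^ 4 * h := by
    have := mul_le_mul_of_nonneg_left hb hε.le
    field_simp at this
    linarith
  have hH : ε ^ 4 * h ≤ 3 * (ε ^ 4 * L) + a / 6 + 2 * (CΩ * ε ^ 4 * m) := by
    have hCV : CΩ * ε ^ 4 * V ≤ CΩ * ε ^ 4 * (2 / cw * a + 2 * m) := by gcongr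
    have hCa : CΩ * ε ^ 4 * (2 / cw * a) ≤ a / 6 := by
      calc CΩ * ε ^ 4 * (2 / cw * a) ≤ cw / 12 * (2 / cw * a) := by gcongr
        _ = a / 6 := by field_simp; ring
    nlinarith [mul_le_mul_of_nonneg_left hhL (by positivity : (0 : ℝ) ≤ ε ^ 4)]
  have hq0' : q * (2 * qstar + 8 * ((Cw ^ 2 + Kw) / 2) + 10) ≤ qstar := by
    rw [le_div_iff₀ (by positivity)] at hq0
    linarith
  -- `ε` times the claim, in the variables `ε² b, ε⁴ h, ε⁴ L, ε⁶ G, C(Ω) ε⁴ m`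
  have hscaled := lower_bound_of_scaled_bounds (G := ε ^ 6 * G) hqs0 hqs1 hq (by positivity) hq0'
    hA ha (by positivity) (by positivity) (by positivity) (by positivity) hWa hB hH
  refine (le_of_eq ?_).trans ((div_le_div_of_nonneg_right hscaled hε.le).trans (le_of_eq ?_)) <;>
    field_simp

section Energy

variable {d : ℕ} {W : ℝ → ℝ} {cw Kw Cw : ℝ} {Ω : Set (Euc d)} {v : Euc d → ℝ}

theorem FepsOn_eq (hW : DoubleWell W cw Kw Cw) (hΩ : IsOpen Ω)
    [IsFiniteMeasure (volume.restrict Ω)] (hv : MemW 3 Ω v) (q ε : ℝ) :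
    FepsOn W q ε v Ω = 1 / ε * (∫ x in Ω, W (-(ε ^ 2) * lap v x + v x))
      - ε * q * (∫ x in Ω, gradSq v x) + (1 - 2 * q) * ε ^ 3 * (∫ x in Ω, lap v x ^ 2)
      + (1 - q) * ε ^ 5 * (∫ x in Ω, gradLapSq v x) := by
  have hWu : Integrable (fun x => W (-(ε ^ 2) * lap v x + v x)) (volume.restrict Ω) :=
    hW.integrable_comp (((hv.memLp_lap (by norm_num)).const_mul _).add
      (hv.memLp hΩ.measurableSet))
  have hg := hv.integrable_gradSq (by norm_num)
  have hl := (hv.memLp_lap (by norm_num)).integrable_sq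
  have hG := hv.integrable_gradLapSq hΩ
  rw [FepsOn, integral_add, integral_add, integral_sub, integral_const_mul, integral_const_mul,
    integral_const_mul, integral_const_mul]
  all_goals apply_rules [Integrable.sub, Integrable.add, Integrable.const_mul]

theorem IepsOn_eq (hW : DoubleWell W cw Kw Cw) (hΩ : IsOpen Ω)
    [IsFiniteMeasure (volume.restrict Ω)] (hv : MemW 3 Ω v) (ε : ℝ) :
    IepsOn W ε v Ω = 1 / ε * (∫ x in Ω, W (v x)) + ε * (∫ x in Ω, gradSq v x)
      + ε ^ 3 * (∫ x in Ω, hessSq v x) + ε ^ 5 * (∫ x in Ω, gradLapSq v x) := by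
  have hWv := hW.integrable_comp (hv.memLp hΩ.measurableSet)
  have hg := hv.integrable_gradSq (by norm_num)
  have hh := hv.integrable_hessSq (by norm_num)
  have hG := hv.integrable_gradLapSq hΩ
  rw [IepsOn, integral_add, integral_add, integral_add, integral_const_mul, integral_const_mul,
    integral_const_mul, integral_const_mul]
  all_goals apply_rules [Integrable.add, Integrable.const_mul]

theorem sub_le_FepsOn (hW : DoubleWell W cw Kw Cw) (hΩ : IsOpen Ω)
    [IsFiniteMeasure (volume.restrict Ω)] (hv : MemW 3 Ω v) {qstar q ε CΩ : ℝ}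
    (hqs0 : 0 < qstar) (hqs1 : qstar < 1) (hq : 0 < q)
    (hq0 : q ≤ qstar / (2 * qstar + 4 * Kw + 4 * Cw ^ 2 + 10))
    (hCΩ : 0 ≤ CΩ) (hε : 0 < ε) (hε4 : CΩ * ε ^ 4 ≤ cw / 12)
    (hinterp : qstar * ∫ x in Ω, ε * gradSq v x ≤ ∫ x in Ω, (W (v x) / ε + ε ^ 3 * hessSq v x))
    (helliptic : ∫ x in Ω, hessSq v x ≤ 3 * (∫ x in Ω, (lap v x) ^ 2) + CΩ * ∫ x in Ω, (v x) ^ 2) :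
    q * IepsOn W ε v Ω - 12 * q / qstar * CΩ * ε ^ 3 * volume.real Ω ≤ FepsOn W q ε v Ω := by
  have hv2 := hv.memLp hΩ.measurableSet
  have hu2 : MemLp (fun x => -(ε ^ 2) * lap v x + v x) 2 (volume.restrict Ω) :=
    ((hv.memLp_lap (by norm_num)).const_mul _).add hv2
  have hWv := hW.integrable_comp hv2
  have hh := hv.integrable_hessSq (by norm_num)
  rw [integral_const_mul, integral_add (hWv.div_const ε) (hh.const_mul _), integral_div,
    integral_const_mul] at hinterp
  have hWa : ∫ x in Ω, W (v x) ≤ 3 / 2 * (∫ x in Ω, W (-(ε ^ 2) * lap v x + v x))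
      + (Cw ^ 2 + Kw) / 2 * (ε ^ 4 * ∫ x in Ω, lap v x ^ 2) := by
    convert hW.integral_le_three_halves_mul_add hv2 hu2 using 3
    rw [← integral_const_mul]
    congr with x
    ring
  have hV := hW.integral_sq_le hv2
  rw [measureReal_restrict_apply_univ] at hV
  rw [FepsOn_eq hW hΩ hv, IepsOn_eq hW hΩ hv]
  exact lower_bound_of_bounds hqs0 hqs1 hq hq0 hW.Kw_pos.le hW.cw_pos hCΩ hε hε4
    measureReal_nonneg (integral_nonneg fun _ => hW.nonneg _)
    (integral_nonneg fun _ => hW.nonneg _) (integral_nonneg fun _ => sq_nonneg _)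
    (integral_nonneg fun _ => sq_nonneg _) (integral_nonneg fun _ => sq_nonneg _)
    hWa hinterp helliptic hV

end Energy

theorem lower_bound_general
    {d : ℕ}
    (W : ℝ → ℝ) (cw Kw Cw : ℝ) (hW : DoubleWell W cw Kw Cw)
    (Ω : Set (Euc d)) (nrm : Euc d → Euc d)
    (hΩo : IsOpen Ω) (hΩb : Bornology.IsBounded Ω)
    (qstar ε0 CΩ : ℝ) (hqs0 : 0 < qstar) (hqs1 : qstar < 1) (hε0 : 0 < ε0) (hCΩ : 0 < CΩ)
    (hinterp : ∀ ε : ℝ, 0 < ε → ε < ε0 → ∀ v : Euc d → ℝ, MemW 2 Ω v →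
      qstar * ∫ x in Ω, ε * gradSq v x ≤ ∫ x in Ω, (W (v x) / ε + ε^3 * hessSq v x))
    (helliptic : ∀ v : Euc d → ℝ, MemW 2 Ω v → NeumannBC Ω nrm v →
      ∫ x in Ω, hessSq v x ≤ 3 * (∫ x in Ω, (lap v x)^2) + CΩ * ∫ x in Ω, (v x)^2) :
    ∃ ε1 : ℝ, 0 < ε1 ∧
      ∀ q : ℝ, 0 < q → q ≤ qstar / (2*qstar + 4*Kw + 4*Cw^2 + 10) →
      ∀ v : Euc d → ℝ, MemW 3 Ω v →
      ∀ ε : ℝ, 0 < ε → ε < ε1 →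
        ((q * IepsOn W ε v Ω - (12*q/qstar) * CΩ * ε^3 * (volume Ω).toReal : ℝ) : EReal) ≤
          Feps W q ε Ω nrm v := by
  have hcw := hW.cw_pos
  set ε1 := (cw / (12 * CΩ)) ^ ((4 : ℕ)⁻¹ : ℝ)
  refine ⟨min ε0 ε1, lt_min hε0 (by positivity), fun q hq hq0 v hv ε hε hεlt => ?_⟩
  have : IsFiniteMeasure (volume.restrict Ω) := isFiniteMeasure_restrict.2 hΩb.measure_lt_top.ne
  have hε4 : CΩ * ε ^ 4 ≤ cw / 12 := by
    have : ε ^ 4 ≤ ε1 ^ 4 := pow_le_pow_left₀ hε.le (hεlt.trans_le (min_le_right _ _)).le 4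
    rw [Real.rpow_inv_natCast_pow (by positivity) (by norm_num)] at this
    rw [le_div_iff₀ (by norm_num)]
    calc CΩ * ε ^ 4 * 12 ≤ CΩ * (cw / (12 * CΩ)) * 12 := by gcongr
      _ = cw := by field_simp
  rw [Feps]
  split_ifs with hvN
  · exact EReal.coe_le_coe_iff.2 <| sub_le_FepsOn hW hΩo hv hqs0 hqs1 hq hq0 hCΩ.le hε hε4
      (hinterp ε hε (hεlt.trans_le (min_le_left _ _)) v (hv.mono (by norm_num)))
      (helliptic v (hv.mono (by norm_num)) hvN.2)
  · exact le_top

/-- **Lower bound (Proposition 3.3).** Let `q*`, `ε₀` be the constants from the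
interpolation inequality on `Ω` and `C(Ω)` the constant from the elliptic estimate.
Set `q₀ := q*/(2q* + 4K_w + 4C_w² + 10)`. Then there exists `ε₁ > 0` such that for every
`0 < q ≤ q₀`, every `v ∈ W^{3,2}(Ω)`, and every `0 < ε < ε₁`,
`F_ε[v] ≥ q I_ε[v; Ω] − (12q/q*) C(Ω) ε³ |Ω|`. -/
theorem lower_bound
    {d : ℕ} (hd : 2 ≤ d)
    (W : ℝ → ℝ) (cw Kw Cw : ℝ) (hW : DoubleWell W cw Kw Cw)
    (Ω : Set (Euc d)) (nrm : Euc d → Euc d)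
    (hΩo : IsOpen Ω) (hΩb : Bornology.IsBounded Ω) (hnrm : OutwardNormal Ω nrm)
    (qstar ε0 CΩ : ℝ) (hqs0 : 0 < qstar) (hqs1 : qstar < 1) (hε0 : 0 < ε0) (hCΩ : 0 < CΩ)
    (hinterp : ∀ ε : ℝ, 0 < ε → ε < ε0 → ∀ v : Euc d → ℝ, MemW 2 Ω v →
      qstar * ∫ x in Ω, ε * gradSq v x ≤ ∫ x in Ω, (W (v x) / ε + ε^3 * hessSq v x))
    (helliptic : ∀ v : Euc d → ℝ, MemW 2 Ω v → NeumannBC Ω nrm v →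
      ∫ x in Ω, hessSq v x ≤ 3 * (∫ x in Ω, (lap v x)^2) + CΩ * ∫ x in Ω, (v x)^2) :
    ∃ ε1 : ℝ, 0 < ε1 ∧
      ∀ q : ℝ, 0 < q → q ≤ qstar / (2*qstar + 4*Kw + 4*Cw^2 + 10) →
      ∀ v : Euc d → ℝ, MemW 3 Ω v →
      ∀ ε : ℝ, 0 < ε → ε < ε1 →
        ((q * IepsOn W ε v Ω - (12*q/qstar) * CΩ * ε^3 * (volume Ω).toReal : ℝ) : EReal) ≤
          Feps W q ε Ω nrm v :=
  lower_bound_general W cw Kw Cw hW Ω nrm hΩo hΩb qstar ε0 CΩ hqs0 hqs1 hε0 hCΩ hinterp helliptic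

end
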